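/- Let n and d be positive integers and let F ∈ (ℂ^n)^{⊗d} be a symmetric tensor with corresponding degree-d polynomial p_F. Then π(Ann(F)_𝟏) ⊆ Ann(p_F)_d, i.e., the image under π of the multidegree-(1,…,1) component of the apolar ideal of F is contained in the degree-d component of the apolar ideal of p_F. -/

import Mathlib

/-!
Common setup, following the paper "On the abundance of minimal border rank symmetric
tensors verifying Comon's conjecture".

* `S = ℂ[α_{i,j} : 1 ≤ i ≤ d, 1 ≤ j ≤ n]` is modeled as `MvPolynomial (Fin d × Fin n) ℂ`,
  with the `ℤ^d`-grading in which `deg α_{i,j} = e_i`; `Scomp n d u` is the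
  multidegree-`u` component (`u : Fin d → ℕ`).
* `V = ℂ[β_1,…,β_n]` is modeled as `MvPolynomial (Fin n) ℂ` with its standard grading;
  `Vcomp n N` is the degree-`N` component.
* The graded duals `T` and `P` are modeled by the same polynomial rings, with `S`
  (resp. `V`) acting by differentiation (`apolar`); `ann F` is the apolar
  (annihilator) ideal of `F`.
* A tensor `F ∈ (ℂ^n)^{⊗d}` is an element of the multidegree-`(1,…,1)` component
  `Scomp n d (fun _ => 1)` (a multilinear form in the `x_{i,j}`).
-/

open MvPolynomial Submodule Module

noncomputable section

namespace BorderComon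

/-- the multidegree-`u` graded component of `S`. -/
def Scomp (n d : ℕ) (u : Fin d → ℕ) : Submodule ℂ (MvPolynomial (Fin d × Fin n) ℂ) :=
  weightedHomogeneousSubmodule ℂ (fun p : Fin d × Fin n => Pi.single p.1 1) u

/-- the degree-`N` graded component of `V`. -/
def Vcomp (n : ℕ) (N : ℕ) : Submodule ℂ (MvPolynomial (Fin n) ℂ) :=
  homogeneousSubmodule (Fin n) ℂ N

/-- the diagonal ring map `π : S → V`, `α_{i,j} ↦ β_j`. -/
def piAlg (n d : ℕ) : MvPolynomial (Fin d × Fin n) ℂ →ₐ[ℂ] MvPolynomial (Fin n) ℂ :=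
  aeval (fun p : Fin d × Fin n => X p.2)

/-- `π` as a `ℂ`-linear map. -/
def piL (n d : ℕ) : MvPolynomial (Fin d × Fin n) ℂ →ₗ[ℂ] MvPolynomial (Fin n) ℂ :=
  (piAlg n d).toLinearMap

/-- the ring map `ρ : S → V`, `α_{1,j} ↦ β_j` and `α_{i,j} ↦ 0` for `i ≥ 2`
(rows are `0`-indexed, so the first row is row `0`). -/
def rho (n d : ℕ) : MvPolynomial (Fin d × Fin n) ℂ →ₐ[ℂ] MvPolynomial (Fin n) ℂ :=
  aeval (fun p : Fin d × Fin n => if (p.1 : ℕ) = 0 then X p.2 else 0)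

/-- the result of differentiating `F` by the monomial `X^a`:
`∂^a X^b = (∏_i b_i!/(b_i-a_i)!) X^{b-a}` (and `= 0` unless `a ≤ b`, which is
automatic since the descending factorial vanishes there). -/
def diffMon {σ : Type*} (a : σ →₀ ℕ) (F : MvPolynomial σ ℂ) : MvPolynomial σ ℂ :=
  ∑ b ∈ F.support, (F.coeff b * ∏ i ∈ a.support, ((b i).descFactorial (a i) : ℂ)) •
    monomial (b - a) (1 : ℂ)

/-- the apolarity action: `apolar F ψ = ψ ∘ F` is the result of letting `ψ` act on `F`
by differentiation, linearly in `ψ`. -/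
def apolar {σ : Type*} (F : MvPolynomial σ ℂ) : MvPolynomial σ ℂ →ₗ[ℂ] MvPolynomial σ ℂ :=
  Finsupp.lsum ℂ (fun a : σ →₀ ℕ => LinearMap.toSpanSingleton ℂ _ (diffMon a F)) ∘ₗ
    (AddMonoidAlgebra.coeffLinearEquiv ℂ : MvPolynomial σ ℂ ≃ₗ[ℂ] (σ →₀ ℕ) →₀ ℂ).toLinearMap

/-- the apolar (annihilator) ideal `Ann(F) = {ψ : ψ ∘ F = 0}`, as a subspace. -/
def ann {σ : Type*} (F : MvPolynomial σ ℂ) : Submodule ℂ (MvPolynomial σ ℂ) :=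
  LinearMap.ker (apolar F)

/-- the ideal `I_R ⊆ S` generated by the `2×2` minors
`α_{i,j} α_{k,ℓ} − α_{i,ℓ} α_{k,j}`, `i < k`, `j < ℓ`. -/
def IR (n d : ℕ) : Ideal (MvPolynomial (Fin d × Fin n) ℂ) :=
  Ideal.span {q | ∃ i k : Fin d, ∃ j l : Fin n, i < k ∧ j < l ∧
    q = X (i, j) * X (k, l) - X (i, l) * X (k, j)}

/-- `J ⊆ S` is a (multigraded) homogeneous ideal: it is the sum of its
multigraded components. -/
def IsHomogS (n d : ℕ) (J : Ideal (MvPolynomial (Fin d × Fin n) ℂ)) : Prop :=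
  Submodule.restrictScalars ℂ J = ⨆ u : Fin d → ℕ, (Submodule.restrictScalars ℂ J ⊓ Scomp n d u)

/-- `I ⊆ V` is a homogeneous ideal: it is the sum of its graded components. -/
def IsHomogV (n : ℕ) (I : Ideal (MvPolynomial (Fin n) ℂ)) : Prop :=
  Submodule.restrictScalars ℂ I = ⨆ N : ℕ, (Submodule.restrictScalars ℂ I ⊓ Vcomp n N)

/-- the exponent redistribution underlying `ψ_u`: in the sorted list
`i_1 ≤ ⋯ ≤ i_N` of the indices of the monomial `β^γ` (value `j` occurring `γ j`
times, `N = |γ|`), row `i` receives the block of positions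
`[∑_{i'<i} u i', ∑_{i'≤i} u i')`, while value `j` occupies positions
`[∑_{j'<j} γ j', ∑_{j'≤j} γ j')`; hence the exponent of `α_{i,j}` is the size of
the intersection of these two intervals. -/
def distrib (n d : ℕ) (u : Fin d → ℕ) (γ : Fin n →₀ ℕ) : (Fin d × Fin n) →₀ ℕ :=
  Finsupp.equivFunOnFinite.symm fun p : Fin d × Fin n =>
    min (∑ i ∈ Finset.univ.filter fun i : Fin d => (i : ℕ) ≤ (p.1 : ℕ), u i)
        (∑ j ∈ Finset.univ.filter fun j : Fin n => (j : ℕ) ≤ (p.2 : ℕ), γ j)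
    - max (∑ i ∈ Finset.univ.filter fun i : Fin d => (i : ℕ) < (p.1 : ℕ), u i)
          (∑ j ∈ Finset.univ.filter fun j : Fin n => (j : ℕ) < (p.2 : ℕ), γ j)

/-- the linear map `ψ_u : V → S` sending a monomial `β_{i_1} β_{i_2} ⋯ β_{i_N}`
with `i_1 ≤ i_2 ≤ ⋯ ≤ i_N` to
`(α_{1,i_1} ⋯ α_{1,i_{u_1}}) (α_{2,i_{u_1+1}} ⋯ α_{2,i_{u_1+u_2}}) ⋯`.
(Its restriction to `Vcomp n (∑ i, u i)` is the map `ψ_u : V_{|u|} → S_u` of the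
paper.) -/
def psi (n d : ℕ) (u : Fin d → ℕ) :
    MvPolynomial (Fin n) ℂ →ₗ[ℂ] MvPolynomial (Fin d × Fin n) ℂ :=
  AddMonoidAlgebra.mapDomainLinearMap ℂ ℂ (distrib n d u)

/-- `Υ(I) = I_R + ∑_{u} ψ_u(I_{|u|}) ⊆ S`. -/
def Upsilon (n d : ℕ) (I : Ideal (MvPolynomial (Fin n) ℂ)) :
    Submodule ℂ (MvPolynomial (Fin d × Fin n) ℂ) :=
  restrictScalars ℂ (IR n d) ⊔
    ⨆ u : Fin d → ℕ, Submodule.map (psi n d u) (restrictScalars ℂ I ⊓ Vcomp n (∑ i, u i))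

/-- the irrelevant ideal `B_X = ∏_{i=1}^d (α_{i,1},…,α_{i,n}) ⊆ S`. -/
def BX (n d : ℕ) : Ideal (MvPolynomial (Fin d × Fin n) ℂ) :=
  ∏ i : Fin d, Ideal.span (Set.range fun j : Fin n => X (i, j))

/-- the irrelevant ideal `B_Y = (β_1,…,β_n) ⊆ V`. -/
def BY (n : ℕ) : Ideal (MvPolynomial (Fin n) ℂ) :=
  Ideal.span (Set.range X)

/-- `Σ(J) = ⊕_{a ≥ 0} ⊕_{s ∈ ℰ} π(J_{a𝟏+s}) ⊆ V`, where
`ℰ = {0, e_1, e_1+e_2, …, e_1+⋯+e_{d-1}}` (the element `s` with `m` ones is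
`fun i => if i < m then 1 else 0`). -/
def SigmaMap (n d : ℕ) (J : Ideal (MvPolynomial (Fin d × Fin n) ℂ)) :
    Submodule ℂ (MvPolynomial (Fin n) ℂ) :=
  ⨆ a : ℕ, ⨆ m : Fin d, Submodule.map (piL n d)
    (restrictScalars ℂ J ⊓ Scomp n d (fun i => a + if (i : ℕ) < (m : ℕ) then 1 else 0))

/-- the set of tensors of rank at most `r`: sums of `r` decomposable tensors
`v_1 ⊗ ⋯ ⊗ v_d = ∏_i (∑_j v_i(j) x_{i,j})`. -/
def rankLE (n d r : ℕ) : Set (MvPolynomial (Fin d × Fin n) ℂ) :=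
  {F | ∃ v : Fin r → Fin d → Fin n → ℂ,
    F = ∑ s : Fin r, ∏ i : Fin d, ∑ j : Fin n, C (v s i j) * X (i, j)}

/-- `F` has border rank at most `r`: coefficientwise (finitely many coefficients are
involved), `F` lies in the closure of the set of tensors of rank at most `r`. -/
def brkLE (n d : ℕ) (F : MvPolynomial (Fin d × Fin n) ℂ) (r : ℕ) : Prop :=
  (fun m => coeff m F) ∈ closure ((fun G => fun m => coeff m G) '' rankLE n d r)

/-- the border rank of a tensor. -/
def brk (n d : ℕ) (F : MvPolynomial (Fin d × Fin n) ℂ) : ℕ :=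
  sInf {r | brkLE n d F r}

/-- polynomials that are sums of `r` `d`-th powers of linear forms. -/
def srankLE (n d r : ℕ) : Set (MvPolynomial (Fin n) ℂ) :=
  {p | ∃ c : Fin r → Fin n → ℂ, p = ∑ s : Fin r, (∑ j : Fin n, C (c s j) * X j) ^ d}

/-- `p` has symmetric border rank at most `r`. -/
def sbrkLE (n d : ℕ) (p : MvPolynomial (Fin n) ℂ) (r : ℕ) : Prop :=
  (fun m => coeff m p) ∈ closure ((fun q => fun m => coeff m q) '' srankLE n d r)

/-- the symmetric border rank of a degree-`d` form. -/
def sbrk (n d : ℕ) (p : MvPolynomial (Fin n) ℂ) : ℕ :=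
  sInf {r | sbrkLE n d p r}

/-- `F` is a symmetric tensor: invariant under the permutations of the `d` factors. -/
def IsSymm (n d : ℕ) (F : MvPolynomial (Fin d × Fin n) ℂ) : Prop :=
  ∀ τ : Equiv.Perm (Fin d), rename (Prod.map τ id) F = F

/-- the degree-`d` polynomial `p_F` corresponding to a symmetric tensor `F`, obtained
by identifying all the rows of variables (`x_{i,j} ↦ y_j`); `F` is the polarization
of `p_F`. -/
def pF (n d : ℕ) (F : MvPolynomial (Fin d × Fin n) ℂ) : MvPolynomial (Fin n) ℂ :=
  rename Prod.snd F

/-- `F` is concise: the contraction `(ℂ^n)^* → (ℂ^n)^{⊗(d-1)}` of the first tensor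
factor, `w ↦ F(x_{1,j} := w_j)`, is injective. -/
def Concise (n d : ℕ) (F : MvPolynomial (Fin d × Fin n) ℂ) : Prop :=
  Function.Injective fun w : Fin n → ℂ =>
    aeval (fun p : Fin d × Fin n => if (p.1 : ℕ) = 0 then C (w p.2) else X p) F

/-- the ideal `∑_{0<u<𝟏} S·Ann(F)_u` generated by the components `Ann(F)_u`,
`0 < u < 𝟏` (componentwise). -/
def midIdeal (n d : ℕ) (F : MvPolynomial (Fin d × Fin n) ℂ) :
    Ideal (MvPolynomial (Fin d × Fin n) ℂ) :=
  Ideal.span (⋃ u ∈ {u : Fin d → ℕ | 0 < u ∧ u < fun _ => 1},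
    ((ann F ⊓ Scomp n d u : Submodule ℂ (MvPolynomial (Fin d × Fin n) ℂ)) :
      Set (MvPolynomial (Fin d × Fin n) ℂ)))

/-- `F` is a *sharp* tensor:
(1) `Ann(F)` has exactly `n-1` minimal generators of multidegree `𝟏`;
(2) `dim (S/Ann F)_u = n` for all `0 < u < 𝟏`;
(3) `dim (S/(Ann(F)_{e_i+e_j}))_{s e_i + e_j} = n` for all `i ≠ j`, `1 ≤ s ≤ d-1`. -/
def Sharp (n d : ℕ) (F : MvPolynomial (Fin d × Fin n) ℂ) : Prop :=
  (finrank ℂ (ann F ⊓ Scomp n d fun _ => 1 :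
        Submodule ℂ (MvPolynomial (Fin d × Fin n) ℂ)) -
      finrank ℂ (restrictScalars ℂ (midIdeal n d F) ⊓ Scomp n d fun _ => 1 :
        Submodule ℂ (MvPolynomial (Fin d × Fin n) ℂ)) = n - 1) ∧
  (∀ u : Fin d → ℕ, 0 < u → u < (fun _ => 1) →
    finrank ℂ (Scomp n d u ⧸ Submodule.comap (Scomp n d u).subtype (ann F)) = n) ∧
  (∀ i j : Fin d, i ≠ j → ∀ s : ℕ, 1 ≤ s → s ≤ d - 1 →
    finrank ℂ (Scomp n d (Pi.single i s + Pi.single j 1) ⧸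
      Submodule.comap (Scomp n d (Pi.single i s + Pi.single j 1)).subtype
        (restrictScalars ℂ (Ideal.span
          ((ann F ⊓ Scomp n d (Pi.single i 1 + Pi.single j 1) :
            Submodule ℂ (MvPolynomial (Fin d × Fin n) ℂ)) :
            Set (MvPolynomial (Fin d × Fin n) ℂ))))) = n)

/-!
Both `ψ ∘ F` and `π(ψ) ∘ p_F` pair forms of equal degree, so they are constants computed
coefficientwise: `∂^a X^b = a! [a = b]` when `|a| = |b|`. A multilinear monomial is
`∏ᵢ x_{i,f(i)}` for some `f : Fin d → Fin n`, and `π` sends it to `β^γ` with `γⱼ = #f⁻¹(j)`.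
The monomials `∏ᵢ x_{i,g(i)}` sent to `β^γ` are those with `g` of the same fibre sizes as `f`,
and for each of them exactly `γ!` permutations `τ` satisfy `f ∘ τ = g`; hence
`γ! · coeff_γ(p_F) = ∑_τ F_{f∘τ}`, which is `d! · F_f` when `F` is symmetric. Therefore
`π(ψ) ∘ p_F = d! · (ψ ∘ F)`.
-/

open Finset
open scoped Nat

section Apolarity

variable {σ : Type*}

theorem eq_of_le_of_degree_eq {a b : σ →₀ ℕ} (hab : a ≤ b) (h : a.degree = b.degree) :
    a = b := by
  have hsplit := congrArg Finsupp.degree (add_tsub_cancel_of_le hab)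
  rw [map_add, h, add_eq_left, Finsupp.degree_eq_zero_iff, tsub_eq_zero_iff_le] at hsplit
  exact le_antisymm hab hsplit

theorem apolar_monomial (F : MvPolynomial σ ℂ) (a : σ →₀ ℕ) (c : ℂ) :
    apolar F (monomial a c) = c • diffMon a F := by
  simp [apolar]

theorem diffMon_of_isHomogeneous {N : ℕ} {F : MvPolynomial σ ℂ} (hF : F.IsHomogeneous N)
    {a : σ →₀ ℕ} (ha : a.degree = N) :
    diffMon a F = C (F.coeff a * a.prod fun _ k => (k ! : ℂ)) := by
  unfold diffMon
  rw [Finset.sum_eq_single a]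
  · simp [Finsupp.prod, Nat.descFactorial_self, smul_eq_C_mul]
  · intro b hb hba
    obtain ⟨i, hi⟩ : ∃ i, b i < a i := by
      by_contra! hle
      refine hba (eq_of_le_of_degree_eq hle ?_).symm
      rw [ha, Finsupp.degree_eq_weight_one]
      exact (hF (mem_support_iff.mp hb)).symm
    have hia : i ∈ a.support := Finsupp.mem_support_iff.mpr (by omega)
    rw [Finset.prod_eq_zero hia (by simp [Nat.descFactorial_eq_zero_iff_lt.mpr hi]),
      mul_zero, zero_smul]
  · intro ha
    rw [notMem_support_iff.mp ha, zero_mul, zero_smul]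

end Apolarity

section Counting

variable {α ι : Type*}

def permFiberEquiv (f g : α → ι) :
    {τ : Equiv.Perm α // f ∘ τ = g} ≃ ∀ j, {i // g i = j} ≃ {i // f i = j} where
  toFun τ j := Equiv.subtypeEquiv τ.1 fun i => by rw [← congrFun τ.2 i]; exact Iff.rfl
  invFun e := ⟨Equiv.ofFiberEquiv e, funext fun i => Equiv.ofFiberEquiv_map e i⟩
  left_inv τ := by
    ext i
    simp [Equiv.ofFiberEquiv]
  right_inv e := by
    funext j
    ext ⟨i, rfl⟩
    simp [Equiv.ofFiberEquiv]
    rfl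

theorem card_perm_comp_eq [Fintype α] [DecidableEq α] [Fintype ι] [DecidableEq ι]
    (f g : α → ι) :
    #{τ : Equiv.Perm α | f ∘ τ = g} =
      if ∀ j, #{i | f i = j} = #{i | g i = j} then ∏ j, (#{i | f i = j})! else 0 := by
  rw [← Fintype.card_subtype, Fintype.card_congr (permFiberEquiv f g), Fintype.card_pi]
  split_ifs with h
  · refine Finset.prod_congr rfl fun j _ => ?_
    have hcard : Fintype.card {i // g i = j} = Fintype.card {i // f i = j} := by
      simp only [Fintype.card_subtype, h]
    rw [Fintype.card_equiv (Fintype.equivOfCardEq hcard), Fintype.card_subtype, h]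
  · push Not at h
    obtain ⟨j, hj⟩ := h
    refine Finset.prod_eq_zero (Finset.mem_univ j) (Fintype.card_eq_zero_iff.mpr ⟨fun e => ?_⟩)
    have := Fintype.card_congr e
    simp only [Fintype.card_subtype] at this
    exact hj this.symm

end Counting

section Tensors

variable {n d : ℕ}

theorem weight_single_fst_apply (a : Fin d × Fin n →₀ ℕ) (i : Fin d) :
    Finsupp.weight (fun p : Fin d × Fin n => (Pi.single p.1 1 : Fin d → ℕ)) a i =
      ∑ j, a (i, j) := by
  simp only [Finsupp.weight_apply, nsmul_eq_mul, Nat.cast_zero, zero_mul, implies_true,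
    Finsupp.sum_fintype, Finset.sum_apply, Pi.mul_apply, Pi.natCast_apply, Nat.cast_id,
    Pi.single_apply, mul_ite, mul_one, mul_zero, Fintype.sum_prod_type]
  rw [Fintype.sum_eq_single i fun i' hi' => by simp [Ne.symm hi']]
  simp

theorem isHomogeneous_of_mem_Scomp {u : Fin d → ℕ} {ψ : MvPolynomial (Fin d × Fin n) ℂ}
    (hψ : ψ ∈ Scomp n d u) : ψ.IsHomogeneous (∑ i, u i) := by
  intro a ha
  have hrow (i : Fin d) : u i = ∑ j, a (i, j) := by rw [← weight_single_fst_apply, hψ ha]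
  simp only [Pi.one_def, ← Finsupp.degree_eq_weight_one, Finsupp.degree_eq_sum,
    Fintype.sum_prod_type, hrow]

def graphExp (f : Fin d → Fin n) : Fin d × Fin n →₀ ℕ :=
  ∑ i, Finsupp.single (i, f i) 1

theorem graphExp_apply (f : Fin d → Fin n) (i : Fin d) (j : Fin n) :
    graphExp f (i, j) = if f i = j then 1 else 0 := by
  simp [graphExp, Finsupp.single_apply, ite_and]

theorem graphExp_injective : Function.Injective (graphExp : (Fin d → Fin n) → _) := by
  intro f g h
  funext i
  simpa [graphExp_apply, eq_comm] using congr($h (i, f i))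

theorem degree_graphExp (f : Fin d → Fin n) : (graphExp f).degree = d := by
  simp [graphExp]

theorem prod_factorial_graphExp (f : Fin d → Fin n) :
    (graphExp f).prod (fun _ k => (k ! : ℂ)) = 1 :=
  Finset.prod_eq_one fun ⟨i, j⟩ _ => by rw [graphExp_apply]; split_ifs <;> simp

theorem mapDomain_snd_graphExp_apply (f : Fin d → Fin n) (j : Fin n) :
    (graphExp f).mapDomain Prod.snd j = #{i | f i = j} := by
  simp [graphExp, Finsupp.mapDomain_finsetSum, Finsupp.single_apply]

theorem mapDomain_prodMap_graphExp (τ : Equiv.Perm (Fin d)) (f : Fin d → Fin n) :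
    (graphExp f).mapDomain (Prod.map τ id) = graphExp (f ∘ τ.symm) := by
  simp only [graphExp, Finsupp.mapDomain_finsetSum, Finsupp.mapDomain_single, Prod.map_apply,
    id, Function.comp_apply]
  exact (Equiv.sum_comp τ.symm _).symm.trans (by simp)

theorem exists_eq_graphExp_of_mem_support {ψ : MvPolynomial (Fin d × Fin n) ℂ}
    (hψ : ψ ∈ Scomp n d fun _ => 1) {a : Fin d × Fin n →₀ ℕ} (ha : a ∈ ψ.support) :
    ∃ f, a = graphExp f := by
  have hrow (i : Fin d) : ∃ j, Finsupp.equivFunOnFinite.symm (fun j => a (i, j)) =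
      Finsupp.single j 1 := by
    rw [← Finsupp.sum_eq_one_iff, Finsupp.sum_fintype _ _ fun _ => rfl]
    simpa [weight_single_fst_apply] using congrFun (hψ (mem_support_iff.mp ha)) i
  choose f hf using hrow
  refine ⟨f, Finsupp.ext fun ⟨i, j⟩ => ?_⟩
  rw [graphExp_apply, ← Finsupp.single_apply, ← hf]
  simp

theorem coeff_rename_snd_mul_prod_factorial {F : MvPolynomial (Fin d × Fin n) ℂ}
    (hF : F ∈ Scomp n d fun _ => 1) (f : Fin d → Fin n) :
    (rename Prod.snd F).coeff ((graphExp f).mapDomain Prod.snd) *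
        ((graphExp f).mapDomain Prod.snd).prod (fun _ k => (k ! : ℂ)) =
      ∑ τ : Equiv.Perm (Fin d), F.coeff (graphExp (f ∘ τ)) := by
  rw [F.as_sum]
  simp only [map_sum, rename_monomial, coeff_sum, coeff_monomial, Finset.sum_mul]
  rw [Finset.sum_comm]
  refine Finset.sum_congr rfl fun b hb => ?_
  obtain ⟨g, rfl⟩ := exists_eq_graphExp_of_mem_support hF hb
  simp only [graphExp_injective.eq_iff, ← Finset.sum_filter]
  have hfibres : (graphExp g).mapDomain Prod.snd = (graphExp f).mapDomain Prod.snd ↔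
      ∀ j, #{i | f i = j} = #{i | g i = j} := by
    simp only [Finsupp.ext_iff, mapDomain_snd_graphExp_apply, eq_comm]
  rw [Finset.sum_const, Finset.filter_congr fun τ _ => eq_comm, card_perm_comp_eq,
    Finsupp.prod_fintype _ _ fun _ => by simp, if_congr hfibres rfl rfl]
  simp only [mapDomain_snd_graphExp_apply]
  split_ifs <;> simp [mul_comm]

theorem IsSymm.coeff_graphExp_comp {F : MvPolynomial (Fin d × Fin n) ℂ} (hsym : IsSymm n d F)
    (f : Fin d → Fin n) (τ : Equiv.Perm (Fin d)) :
    F.coeff (graphExp (f ∘ τ)) = F.coeff (graphExp f) := by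
  have := coeff_rename_mapDomain (Prod.map τ.symm id)
    (τ.symm.injective.prodMap Function.injective_id) F (graphExp f)
  rwa [hsym, mapDomain_prodMap_graphExp, Equiv.symm_symm] at this

theorem diffMon_mapDomain_snd_graphExp_pF {F : MvPolynomial (Fin d × Fin n) ℂ}
    (hF : F ∈ Scomp n d fun _ => 1) (hsym : IsSymm n d F) (f : Fin d → Fin n) :
    diffMon ((graphExp f).mapDomain Prod.snd) (pF n d F) =
      (d ! : ℂ) • rename Prod.snd (diffMon (graphExp f) F) := by
  have hFd : F.IsHomogeneous d := by simpa using isHomogeneous_of_mem_Scomp hF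
  rw [pF, diffMon_of_isHomogeneous hFd.rename_isHomogeneous
      (by rw [Finsupp.degree_mapDomain, degree_graphExp]),
    diffMon_of_isHomogeneous hFd (degree_graphExp f), coeff_rename_snd_mul_prod_factorial hF,
    prod_factorial_graphExp]
  simp [hsym.coeff_graphExp_comp, smul_eq_C_mul, Fintype.card_perm]

theorem apolar_pF_rename_snd {F ψ : MvPolynomial (Fin d × Fin n) ℂ}
    (hF : F ∈ Scomp n d fun _ => 1) (hsym : IsSymm n d F) (hψ : ψ ∈ Scomp n d fun _ => 1) :
    apolar (pF n d F) (rename Prod.snd ψ) = (d ! : ℂ) • rename Prod.snd (apolar F ψ) := by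
  rw [ψ.as_sum]
  simp only [map_sum, rename_monomial, apolar_monomial, map_smul, Finset.smul_sum]
  refine Finset.sum_congr rfl fun a ha => ?_
  obtain ⟨f, rfl⟩ := exists_eq_graphExp_of_mem_support hψ ha
  rw [diffMon_mapDomain_snd_graphExp_pF hF hsym, smul_comm]

end Tensors

theorem stmt_0_general (n d : ℕ)
    (F : MvPolynomial (Fin d × Fin n) ℂ)
    (hF : F ∈ Scomp n d fun _ => 1) (hsym : IsSymm n d F) :
    Submodule.map (piL n d) (ann F ⊓ Scomp n d fun _ => 1) ≤
      ann (pF n d F) ⊓ Vcomp n d := by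
  rintro _ ⟨ψ, ⟨hψann, hψ⟩, rfl⟩
  have hπ : piL n d ψ = rename Prod.snd ψ := by rw [rename_eq_aeval]; rfl
  rw [hπ]
  refine Submodule.mem_inf.mpr ⟨?_, ?_⟩
  · rw [ann, LinearMap.mem_ker, apolar_pF_rename_snd hF hsym hψ, LinearMap.mem_ker.mp hψann,
      map_zero, smul_zero]
  · simpa [Vcomp] using (isHomogeneous_of_mem_Scomp hψ).rename_isHomogeneous

/-- Lemma 3.3: for a symmetric tensor `F`,
`π(Ann(F)_𝟏) ⊆ Ann(p_F)_d`. -/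
theorem stmt_0 (n d : ℕ) (hn : 0 < n) (hd : 0 < d)
    (F : MvPolynomial (Fin d × Fin n) ℂ)
    (hF : F ∈ Scomp n d fun _ => 1) (hsym : IsSymm n d F) :
    Submodule.map (piL n d) (ann F ⊓ Scomp n d fun _ => 1) ≤
      ann (pF n d F) ⊓ Vcomp n d :=
  stmt_0_general n d F hF hsym

end BorderComon
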